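/- For a, b > 0, the pointwise supremum over x ∈ ℝ of a·log(1 − σ(x)) + b·log(σ(x)) equals a·log(a/(a+b)) + b·log(b/(a+b)), attained at x = log(b/a). -/

import Mathlib

/-!
With `p = 1 - σ x` and `q = σ x`, the objective is `a log p + b log q` on the open simplex. Comparing
each term with its value at `p = a/(a+b)`, `q = b/(a+b)` through `log t ≤ t - 1` gives two linear error
terms that add up to `(a + b)(p + q - 1) ≤ 0` (Gibbs' inequality for two outcomes). The sigmoid hits
`b/(a+b)` exactly at `x = log (b/a)`.
-/

open Real

theorem Real.sigmoid_log_div {a b : ℝ} (ha : 0 < a) (hb : 0 < b) :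
    sigmoid (log (b / a)) = b / (a + b) := by
  rw [sigmoid_def, exp_neg, exp_log (div_pos hb ha), inv_div]
  field_simp
  ring

theorem Real.mul_log_le_mul_log_div_add {a s u : ℝ} (ha : 0 < a) (hs : 0 < s) (hu : 0 < u) :
    a * log u ≤ a * log (a / s) + (u * s - a) := by
  have key : log (u / (a / s)) ≤ u / (a / s) - 1 := log_le_sub_one_of_pos (by positivity)
  rw [log_div hu.ne' (by positivity)] at key
  calc a * log u = a * log (a / s) + a * (log u - log (a / s)) := by ring
    _ ≤ a * log (a / s) + a * (u / (a / s) - 1) := by gcongr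
    _ = a * log (a / s) + (u * s - a) := by field_simp

theorem Real.mul_log_add_mul_log_le {a b p q : ℝ} (ha : 0 < a) (hb : 0 < b) (hp : 0 < p)
    (hq : 0 < q) (hpq : p + q ≤ 1) :
    a * log p + b * log q ≤ a * log (a / (a + b)) + b * log (b / (a + b)) := by
  have hab : 0 < a + b := add_pos ha hb
  have hp' := mul_log_le_mul_log_div_add ha hab hp
  have hq' := mul_log_le_mul_log_div_add hb hab hq
  have hsum : (p + q) * (a + b) ≤ a + b := mul_le_of_le_one_left hab.le hpq
  linarith

/-- For `a, b > 0`, the supremum over `x ∈ ℝ` of `a·log(1-σ(x)) + b·log(σ(x))` equals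
`a·log(a/(a+b)) + b·log(b/(a+b))`, attained at `x = log(b/a)`. -/
theorem stmt_4 (a b : ℝ) (ha : 0 < a) (hb : 0 < b)
    (σ : ℝ → ℝ) (hσ : ∀ x, σ x = 1 / (1 + Real.exp (-x))) :
    (a * Real.log (1 - σ (Real.log (b / a))) + b * Real.log (σ (Real.log (b / a))) =
      a * Real.log (a / (a + b)) + b * Real.log (b / (a + b))) ∧
    ∀ x : ℝ, a * Real.log (1 - σ x) + b * Real.log (σ x) ≤
      a * Real.log (a / (a + b)) + b * Real.log (b / (a + b)) := by
  obtain rfl : σ = sigmoid := funext fun x => by rw [hσ, sigmoid_def, one_div]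
  refine ⟨?_, fun x => ?_⟩
  · have hcompl : 1 - b / (a + b) = a / (a + b) := by field_simp; ring
    rw [sigmoid_log_div ha hb, hcompl]
  · exact mul_log_add_mul_log_le ha hb (sub_pos.mpr (sigmoid_lt_one x)) (sigmoid_pos x)
      (sub_add_cancel 1 (sigmoid x)).le
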